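/- Conversely, with notation as above, suppose Φ : F₀¹ → F₀² is a *-algebra isomorphism fixing A pointwise and intertwining the G-actions (with G separating points of X). Then Z(χ) := Φ(U_χ)·V_χ* defines a map X → U(Z(A)) with Z(ι) = 1 such that ω₁(χ,χ') = ∂Z(χ,χ')·ω₂(χ,χ') for all χ, χ' ∈ X, where ∂Z(χ,χ') = Z(χ)β_χ(Z(χ'))Z(χχ')⁻¹. -/

import Mathlib

/-- ω is a generalized 2-cocycle for the system β of representatives:
unitary values, β_{χ₁}∘β_{χ₂} = Ad(ω(χ₁,χ₂))∘β_{χ₁χ₂}, normalization, cocycle equation. -/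
def IsGenCocycle {A : Type*} [NormedRing A] [StarRing A] [CStarRing A] [NormedAlgebra ℂ A]
    [CompleteSpace A] [StarModule ℂ A] {X : Type*} [Group X]
    (β : X → (A ≃⋆ₐ[ℂ] A)) (ω : X → X → A) : Prop :=
  (∀ χ₁ χ₂, ω χ₁ χ₂ ∈ unitary A) ∧
  (∀ χ₁ χ₂ (a : A), β χ₁ (β χ₂ a) = ω χ₁ χ₂ * β (χ₁ * χ₂) a * star (ω χ₁ χ₂)) ∧
  (∀ χ, ω 1 χ = 1 ∧ ω χ 1 = 1) ∧
  (∀ χ₁ χ₂ χ₃, ω χ₁ χ₂ * ω (χ₁ * χ₂) χ₃ = β χ₁ (ω χ₂ χ₃) * ω χ₁ (χ₂ * χ₃))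

/-- The twisted product on F₀, the free left A-module on {U_χ : χ ∈ X}:
(a₁U_{χ₁})·(a₂U_{χ₂}) = a₁·β_{χ₁}(a₂)·ω(χ₁,χ₂)·U_{χ₁χ₂}. -/
noncomputable def crossedMul {A : Type*} [NormedRing A] [StarRing A] [CStarRing A]
    [NormedAlgebra ℂ A] [CompleteSpace A] [StarModule ℂ A] {X : Type*} [Group X]
    (β : X → (A ≃⋆ₐ[ℂ] A)) (ω : X → X → A) (F G : X →₀ A) : X →₀ A :=
  F.sum fun χ₁ a₁ => G.sum fun χ₂ a₂ =>
    Finsupp.single (χ₁ * χ₂) (a₁ * β χ₁ a₂ * ω χ₁ χ₂)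

/-- The involution on F₀: (aU_χ)* = U_χ*·a* with U_χ* := ω(χ⁻¹,χ)*·U_{χ⁻¹}, i.e.
(aU_χ)* = ω(χ⁻¹,χ)*·β_{χ⁻¹}(a*)·U_{χ⁻¹}. -/
noncomputable def crossedStar {A : Type*} [NormedRing A] [StarRing A] [CStarRing A]
    [NormedAlgebra ℂ A] [CompleteSpace A] [StarModule ℂ A] {X : Type*} [Group X]
    (β : X → (A ≃⋆ₐ[ℂ] A)) (ω : X → X → A) (F : X →₀ A) : X →₀ A :=
  F.sum fun χ a => Finsupp.single χ⁻¹ (star (ω χ⁻¹ χ) * β χ⁻¹ (star a))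

/-- The dual action α_g(Σ_χ a_χU_χ) := Σ_χ χ(g)·a_χU_χ on F₀, for a pairing
e : G →* (X →* Circle). -/
noncomputable def dualAction {A : Type*} [NormedRing A] [StarRing A] [CStarRing A]
    [NormedAlgebra ℂ A] [CompleteSpace A] [StarModule ℂ A] {X : Type*} [CommGroup X]
    {G : Type*} [Group G] (e : G →* (X →* Circle)) (g : G) (F : X →₀ A) : X →₀ A :=
  F.sum fun χ a => Finsupp.single χ ((e g χ : ℂ) • a)

/-! Because `Φ` commutes with the dual action and the characters of `G` separate the points of `X`,
`Φ` preserves the grading of `F₀` by `X`, so `Φ(U_χ) = Z(χ) V_χ`. Since `Φ` fixes `A`, this gives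
`Φ(a U_χ) = a Z(χ) V_χ`; comparing `Φ(U_χ b) = Φ(β_χ(b) U_χ)` with `Φ(U_χ) b` shows that `Z(χ)` is
central, applying `Φ` to `U_χ* U_χ = 1` shows it is unitary, and applying it to
`U_χ U_χ' = ω₁(χ,χ') U_{χχ'}` yields `ω₁(χ,χ') Z(χχ') = Z(χ) β_χ(Z(χ')) ω₂(χ,χ')`. -/

open Finsupp

section CrossedProduct

variable {A : Type*} [NormedRing A] [StarRing A] [CStarRing A] [NormedAlgebra ℂ A]
  [CompleteSpace A] [StarModule ℂ A] {X : Type*}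

section Group

variable [Group X] {β : X → (A ≃⋆ₐ[ℂ] A)} {ω : X → X → A}

namespace IsGenCocycle

theorem mem_unitary (hω : IsGenCocycle β ω) (χ₁ χ₂ : X) : ω χ₁ χ₂ ∈ unitary A :=
  hω.1 χ₁ χ₂

theorem one_left (hω : IsGenCocycle β ω) (χ : X) : ω 1 χ = 1 :=
  (hω.2.2.1 χ).1

theorem one_right (hω : IsGenCocycle β ω) (χ : X) : ω χ 1 = 1 :=
  (hω.2.2.1 χ).2

theorem apply_inv_self (hω : IsGenCocycle β ω) (χ : X) : β χ (ω χ⁻¹ χ) = ω χ χ⁻¹ := by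
  have h := hω.2.2.2 χ χ⁻¹ χ
  rwa [mul_inv_cancel, inv_mul_cancel, hω.one_left, hω.one_right, mul_one, mul_one, eq_comm] at h

end IsGenCocycle

variable (β ω)

@[simp]
theorem crossedMul_single_single (χ₁ χ₂ : X) (a₁ a₂ : A) :
    crossedMul β ω (single χ₁ a₁) (single χ₂ a₂) = single (χ₁ * χ₂) (a₁ * β χ₁ a₂ * ω χ₁ χ₂) := by
  simp [crossedMul]

@[simp]
theorem crossedStar_single (χ : X) (a : A) :
    crossedStar β ω (single χ a) = single χ⁻¹ (star (ω χ⁻¹ χ) * β χ⁻¹ (star a)) := by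
  simp [crossedStar]

theorem crossedMul_crossedStar_single_single (χ : X) (a b : A) :
    crossedMul β ω (crossedStar β ω (single χ a)) (single χ b) =
      single 1 (star (ω χ⁻¹ χ) * β χ⁻¹ (star a * b) * ω χ⁻¹ χ) := by
  rw [crossedStar_single, crossedMul_single_single, inv_mul_cancel, map_mul]
  simp only [mul_assoc]

variable {β ω}

theorem crossedMul_single_crossedStar_single_one (hω : IsGenCocycle β ω) (χ : X) (a : A) :
    crossedMul β ω (single χ a) (crossedStar β ω (single χ 1)) = single 1 a := by
  rw [crossedStar_single, crossedMul_single_single, mul_inv_cancel, star_one, map_one, mul_one,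
    map_star, hω.apply_inv_self, mul_assoc, Unitary.star_mul_self_of_mem (hω.mem_unitary _ _),
    mul_one]

end Group

@[simp]
theorem dualAction_single [CommGroup X] {G : Type*} [Group G] (e : G →* (X →* Circle)) (g : G)
    (χ : X) (a : A) : dualAction e g (single χ a) = (e g χ : ℂ) • single χ a := by
  simp [dualAction]

theorem dualAction_apply [CommGroup X] {G : Type*} [Group G] (e : G →* (X →* Circle)) (g : G)
    (F : X →₀ A) (χ : X) : dualAction e g F χ = (e g χ : ℂ) • F χ := by
  classical
  simp only [dualAction, Finsupp.sum_apply, single_apply, sum_ite_eq', mem_support_iff, ne_eq,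
    ite_not, ite_eq_right_iff]
  intro h
  rw [h, smul_zero]

end CrossedProduct

theorem eq_mul_star_mul_of_mul_eq {R : Type*} [Monoid R] [StarMul R] {u a b c : R}
    (hu : u ∈ unitary R) (hc : u ∈ Set.center R) (h : a * u = b * c) : a = b * star u * c := by
  have hc' := Semigroup.mem_center_iff.mp (Set.star_mem_center hc) c
  calc a = a * u * star u := by rw [mul_assoc, Unitary.mul_star_self_of_mem hu, mul_one]
    _ = b * star u * c := by rw [h, mul_assoc, hc', mul_assoc]

theorem eq_one_of_star_mul_mul_eq_one {R : Type*} [Monoid R] [StarMul R] {u x : R}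
    (hu : u ∈ unitary R) (h : star u * x * u = 1) : x = 1 := by
  calc x = u * (star u * x * u) * star u := by
        rw [← mul_assoc, ← mul_assoc, Unitary.mul_star_self_of_mem hu, one_mul, mul_assoc,
          Unitary.mul_star_self_of_mem hu, mul_one]
    _ = 1 := by rw [h, mul_one, Unitary.mul_star_self_of_mem hu]

section Isomorphism

variable {A : Type*} [NormedRing A] [StarRing A] [CStarRing A] [NormedAlgebra ℂ A]
  [CompleteSpace A] [StarModule ℂ A] {X : Type*} {Φ : (X →₀ A) → (X →₀ A)}

theorem eq_single_apply_of_commute_dualAction [CommGroup X] {G : Type*} [Group G]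
    {e : G →* (X →* Circle)} (hsep : ∀ χ : X, χ ≠ 1 → ∃ g : G, e g χ ≠ 1)
    (hsmul : ∀ (c : ℂ) (F : X →₀ A), Φ (c • F) = c • Φ F)
    (hint : ∀ (g : G) (F : X →₀ A), Φ (dualAction e g F) = dualAction e g (Φ F))
    (χ : X) (a : A) : Φ (single χ a) = single χ (Φ (single χ a) χ) := by
  ext χ'
  rcases eq_or_ne χ χ' with rfl | hne
  · rw [single_eq_same]
  rw [single_eq_of_ne' hne]
  obtain ⟨g, hg⟩ := hsep (χ * χ'⁻¹) (mul_inv_eq_one.not.mpr hne)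
  have hgne : (e g χ : ℂ) ≠ e g χ' := fun h ↦ hg <| by
    rw [map_mul, map_inv, Circle.coe_injective h, mul_inv_cancel]
  have h := congrArg (· χ') (hint g (single χ a))
  simp only [dualAction_single, hsmul, dualAction_apply, Finsupp.smul_apply] at h
  by_contra hv
  exact hgne (smul_left_injective ℂ hv h)

variable [Group X] {β : X → (A ≃⋆ₐ[ℂ] A)} {ω₁ ω₂ : X → X → A}

theorem apply_single_eq_single_mul (hβ1 : ∀ a : A, β 1 a = a)
    (hω₁ : IsGenCocycle β ω₁) (hω₂ : IsGenCocycle β ω₂)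
    (hmul : ∀ F₁ F₂ : X →₀ A, Φ (crossedMul β ω₁ F₁ F₂) = crossedMul β ω₂ (Φ F₁) (Φ F₂))
    (hfix : ∀ a : A, Φ (single 1 a) = single 1 a) {χ : X} {z : A}
    (hz : Φ (single χ 1) = single χ z) (a : A) : Φ (single χ a) = single χ (a * z) := by
  have h := hmul (single 1 a) (single χ 1)
  simpa only [crossedMul_single_single, hfix, hz, hβ1, one_mul, mul_one, hω₁.one_left,
    hω₂.one_left] using h

theorem mem_center_of_apply_single (hω₁ : IsGenCocycle β ω₁) (hω₂ : IsGenCocycle β ω₂)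
    (hmul : ∀ F₁ F₂ : X →₀ A, Φ (crossedMul β ω₁ F₁ F₂) = crossedMul β ω₂ (Φ F₁) (Φ F₂))
    (hfix : ∀ a : A, Φ (single 1 a) = single 1 a) {χ : X} {z : A}
    (hΦ : ∀ a : A, Φ (single χ a) = single χ (a * z)) : z ∈ Set.center A := by
  refine Semigroup.mem_center_iff.mpr fun b ↦ ?_
  obtain ⟨c, rfl⟩ := (β χ).surjective b
  have h := hmul (single χ 1) (single 1 c)
  simp only [crossedMul_single_single, hΦ, hfix, one_mul, mul_one, hω₁.one_right,
    hω₂.one_right] at h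
  exact single_injective χ h

theorem star_mul_self_of_apply_single (hω₁ : IsGenCocycle β ω₁) (hω₂ : IsGenCocycle β ω₂)
    (hmul : ∀ F₁ F₂ : X →₀ A, Φ (crossedMul β ω₁ F₁ F₂) = crossedMul β ω₂ (Φ F₁) (Φ F₂))
    (hstar : ∀ F : X →₀ A, Φ (crossedStar β ω₁ F) = crossedStar β ω₂ (Φ F))
    (hfix : ∀ a : A, Φ (single 1 a) = single 1 a) {χ : X} {z : A}
    (hz : Φ (single χ 1) = single χ z) : star z * z = 1 := by
  have h := hmul (crossedStar β ω₁ (single χ 1)) (single χ 1)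
  rw [hstar, hz, crossedMul_crossedStar_single_single, crossedMul_crossedStar_single_single,
    star_one, one_mul, map_one, mul_one, Unitary.star_mul_self_of_mem (hω₁.mem_unitary _ _),
    hfix] at h
  apply (β χ⁻¹).injective
  rw [map_one]
  exact eq_one_of_star_mul_mul_eq_one (hω₂.mem_unitary _ _) (single_injective 1 h).symm

theorem cocycle_mul_eq_of_apply_single
    (hmul : ∀ F₁ F₂ : X →₀ A, Φ (crossedMul β ω₁ F₁ F₂) = crossedMul β ω₂ (Φ F₁) (Φ F₂))
    {χ χ' : X} {z z' z'' : A} (hz : Φ (single χ 1) = single χ z)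
    (hz' : Φ (single χ' 1) = single χ' z')
    (hΦ : ∀ a : A, Φ (single (χ * χ') a) = single (χ * χ') (a * z'')) :
    ω₁ χ χ' * z'' = z * β χ z' * ω₂ χ χ' := by
  have h := hmul (single χ 1) (single χ' 1)
  rw [crossedMul_single_single, hz, hz', crossedMul_single_single, hΦ, map_one, mul_one,
    one_mul] at h
  exact single_injective _ h

end Isomorphism

theorem stmt18_general
    {A : Type*} [NormedRing A] [StarRing A] [CStarRing A] [NormedAlgebra ℂ A]
    [CompleteSpace A] [StarModule ℂ A]
    {X : Type*} [CommGroup X]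
    {G : Type*} [Group G]
    (β : X → (A ≃⋆ₐ[ℂ] A))
    (hβ1 : ∀ a : A, β 1 a = a)
    (ω₁ ω₂ : X → X → A)
    (hω₁ : IsGenCocycle β ω₁) (hω₂ : IsGenCocycle β ω₂)
    (e : G →* (X →* Circle))
    (hsep : ∀ χ : X, χ ≠ 1 → ∃ g : G, e g χ ≠ 1)
    (Φ : (X →₀ A) → (X →₀ A))
    (hsmul : ∀ (c : ℂ) (F : X →₀ A), Φ (c • F) = c • Φ F)
    (hmul : ∀ F₁ F₂ : X →₀ A, Φ (crossedMul β ω₁ F₁ F₂) = crossedMul β ω₂ (Φ F₁) (Φ F₂))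
    (hstar : ∀ F : X →₀ A, Φ (crossedStar β ω₁ F) = crossedStar β ω₂ (Φ F))
    (hfix : ∀ a : A, Φ (Finsupp.single 1 a) = Finsupp.single 1 a)
    (hint : ∀ (g : G) (F : X →₀ A), Φ (dualAction e g F) = dualAction e g (Φ F)) :
    ∃ z : X → A,
      -- Z(χ) = Φ(U_χ)·V_χ* :
      (∀ χ : X, Finsupp.single (1 : X) (z χ) =
          crossedMul β ω₂ (Φ (Finsupp.single χ (1 : A)))
            (crossedStar β ω₂ (Finsupp.single χ (1 : A)))) ∧
      (∀ χ, z χ ∈ unitary A) ∧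
      (∀ χ, z χ ∈ Set.center A) ∧
      z 1 = 1 ∧
      -- ω₁ = ∂Z·ω₂ :
      (∀ χ χ' : X, ω₁ χ χ' = z χ * β χ (z χ') * star (z (χ * χ')) * ω₂ χ χ') := by
  set z : X → A := fun χ ↦ Φ (single χ 1) χ
  have hz (χ : X) : Φ (single χ 1) = single χ (z χ) :=
    eq_single_apply_of_commute_dualAction hsep hsmul hint χ 1
  have hΦ (χ : X) : ∀ a, Φ (single χ a) = single χ (a * z χ) :=
    apply_single_eq_single_mul hβ1 hω₁ hω₂ hmul hfix (hz χ)
  have hcenter (χ : X) : z χ ∈ Set.center A := mem_center_of_apply_single hω₁ hω₂ hmul hfix (hΦ χ)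
  have hunitary (χ : X) : z χ ∈ unitary A := by
    have h := star_mul_self_of_apply_single hω₁ hω₂ hmul hstar hfix (hz χ)
    exact Unitary.mem_iff.mpr ⟨h, ((Semigroup.mem_center_iff.mp (hcenter χ) _).symm).trans h⟩
  refine ⟨z, fun χ ↦ ?_, hunitary, hcenter, ?_, fun χ χ' ↦ ?_⟩
  · rw [hz, crossedMul_single_crossedStar_single_one hω₂]
  · simpa using congr($(hfix 1) 1)
  · exact eq_mul_star_mul_of_mul_eq (hunitary _) (hcenter _)
      (cocycle_mul_eq_of_apply_single hmul (hz χ) (hz χ') (hΦ (χ * χ')))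

/-- conversely, if Φ : F₀¹ → F₀² is a *-algebra isomorphism fixing A
pointwise and intertwining the dual G-actions (G separating the points of X), then
Z(χ) := Φ(U_χ)·V_χ* is a central unitary of A with Z(ι) = 1 and ω₁ = ∂Z·ω₂. -/
theorem stmt18
    {A : Type*} [NormedRing A] [StarRing A] [CStarRing A] [NormedAlgebra ℂ A]
    [CompleteSpace A] [StarModule ℂ A]
    {X : Type*} [CommGroup X]
    {G : Type*} [Group G]
    (β : X → (A ≃⋆ₐ[ℂ] A))
    (hβ1 : ∀ a : A, β 1 a = a)
    (ω₁ ω₂ : X → X → A)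
    (hω₁ : IsGenCocycle β ω₁) (hω₂ : IsGenCocycle β ω₂)
    (e : G →* (X →* Circle))
    (hsep : ∀ χ : X, χ ≠ 1 → ∃ g : G, e g χ ≠ 1)
    (Φ : (X →₀ A) → (X →₀ A))
    (hadd : ∀ F₁ F₂ : X →₀ A, Φ (F₁ + F₂) = Φ F₁ + Φ F₂)
    (hsmul : ∀ (c : ℂ) (F : X →₀ A), Φ (c • F) = c • Φ F)
    (hmul : ∀ F₁ F₂ : X →₀ A, Φ (crossedMul β ω₁ F₁ F₂) = crossedMul β ω₂ (Φ F₁) (Φ F₂))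
    (hstar : ∀ F : X →₀ A, Φ (crossedStar β ω₁ F) = crossedStar β ω₂ (Φ F))
    (hbij : Function.Bijective Φ)
    (hfix : ∀ a : A, Φ (Finsupp.single 1 a) = Finsupp.single 1 a)
    (hint : ∀ (g : G) (F : X →₀ A), Φ (dualAction e g F) = dualAction e g (Φ F)) :
    ∃ z : X → A,
      -- Z(χ) = Φ(U_χ)·V_χ* :
      (∀ χ : X, Finsupp.single (1 : X) (z χ) =
          crossedMul β ω₂ (Φ (Finsupp.single χ (1 : A)))
            (crossedStar β ω₂ (Finsupp.single χ (1 : A)))) ∧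
      (∀ χ, z χ ∈ unitary A) ∧
      (∀ χ, z χ ∈ Set.center A) ∧
      z 1 = 1 ∧
      -- ω₁ = ∂Z·ω₂ :
      (∀ χ χ' : X, ω₁ χ χ' = z χ * β χ (z χ') * star (z (χ * χ')) * ω₂ χ χ') :=
  stmt18_general β hβ1 ω₁ ω₂ hω₁ hω₂ e hsep Φ hsmul hmul hstar hfix hint
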